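/- Let x_1, …, x_n ∈ ℝ^d, let b_1, …, b_c ∈ ℝ^d with x_i ≠ b_k for all i, k, let r > 1, and let 1 ≤ K̃ ≤ c. Let α ∈ ℝ^{n×c} be any membership matrix each of whose rows α^i lies in the probability simplex Δ_c and has at most K̃ nonzero entries. Define α' row-wise by the closed-form solution: for each i, with h_{ik} = ‖x_i − b_k‖₂ and σ_i a permutation sorting k ↦ h_{ik} ascending, set α'_{i,σ_i(k)} = h_{i,σ_i(k)}^{1/(1−r)} / (Σ_{s=1}^{K̃} h_{i,σ_i(s)}^{1/(1−r)}) for k ≤ K̃ and α'_{i,σ_i(k)} = 0 for k > K̃. Define b'_k = (Σ_{i=1}^n (α'_{ik})^r x_i/(2‖x_i − b_k‖₂)) / (Σ_{i=1}^n (α'_{ik})^r/(2‖x_i − b_k‖₂)) whenever the denominator is positive, and b'_k = b_k otherwise. Then Σ_{i=1}^n Σ_{k=1}^c ‖x_i − b'_k‖₂ (α'_{ik})^r ≤ Σ_{i=1}^n Σ_{k=1}^c ‖x_i − b_k‖₂ (α_{ik})^r. -/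

import Mathlib

/-!
The membership step is exact minimization of each row. For a row with support `S` and
distances `h`, Jensen's inequality for `t ↦ t ^ r` gives
`∑ h_k α_k ^ r ≥ (∑_{k ∈ S} h_k ^ (1/(1-r))) ^ (1-r)`, with equality for the closed form on `S`.
As `t ↦ t ^ (1/(1-r))` is decreasing, the inner sum over at most `K̃` indices is largest on the
`K̃` nearest centroids, and the exponent `1 - r < 0` turns this into the smallest value.

The centroid step is a majorize–minimize step: `t ≤ t ^ 2 / (2h) + h / 2`, tight at `t = h`,
bounds each weighted distance sum by a weighted least-squares objective that agrees with it at the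
old centroid, and the new centroid minimizes that objective.
-/

open Finset

namespace Finset

variable {ι : Type*} [DecidableEq ι]

theorem sum_le_sum_of_card_le_of_forall_notMem_le {A B : Finset ι} {w : ι → ℝ}
    (hcard : #A ≤ #B) (hdom : ∀ a ∉ B, ∀ b ∈ B, w a ≤ w b) (hw : ∀ b ∈ B, 0 ≤ w b) :
    ∑ a ∈ A, w a ≤ ∑ b ∈ B, w b := by
  rw [← sub_nonneg, ← sum_sdiff_sub_sum_sdiff, sub_nonneg]
  rcases (B \ A).eq_empty_or_nonempty with hBA | hBA
  · have : A \ B = ∅ := card_eq_zero.mp <| by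
      simpa [hBA] using card_sdiff_le_card_sdiff_iff.mpr hcard
    simp [this, hBA]
  set t := (B \ A).inf' hBA w
  calc ∑ a ∈ A \ B, w a ≤ #(A \ B) • t := by
        refine sum_le_card_nsmul _ _ _ fun a ha => (le_inf'_iff hBA w).mpr fun b hb => ?_
        exact hdom a (mem_sdiff.mp ha).2 b (mem_sdiff.mp hb).1
    _ ≤ #(B \ A) • t := by
        have ht : 0 ≤ t := (le_inf'_iff hBA w).mpr fun b hb => hw b (mem_sdiff.mp hb).1
        exact nsmul_le_nsmul_left ht (card_sdiff_le_card_sdiff_iff.mpr hcard)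
    _ ≤ ∑ b ∈ B \ A, w b := card_nsmul_le_sum _ _ _ fun b hb => inf'_le w hb

end Finset

section RpowSums

variable {ι : Type*}

theorem Real.sum_rpow_one_sub_mul_div_sum_rpow (s : Finset ι) (r : ℝ) {v : ι → ℝ}
    (hv : ∀ k ∈ s, 0 < v k) (hT : 0 < ∑ k ∈ s, v k) :
    ∑ k ∈ s, v k ^ (1 - r) * (v k / ∑ j ∈ s, v j) ^ r = (∑ k ∈ s, v k) ^ (1 - r) := by
  set T := ∑ k ∈ s, v k
  have hterm : ∀ k ∈ s, v k ^ (1 - r) * (v k / T) ^ r = v k / T ^ r := fun k hk => by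
    rw [Real.div_rpow (hv k hk).le hT.le, mul_div_assoc', ← Real.rpow_add (hv k hk),
      sub_add_cancel, Real.rpow_one]
  rw [sum_congr rfl hterm, ← sum_div, Real.rpow_sub hT, Real.rpow_one]

theorem Real.rpow_sum_le_sum_rpow_one_sub_mul_rpow (s : Finset ι) {r : ℝ} (hr : 1 ≤ r)
    {v α : ι → ℝ} (hv : ∀ k ∈ s, 0 < v k) (hα : ∀ k ∈ s, 0 ≤ α k) (hα1 : ∑ k ∈ s, α k = 1) :
    (∑ k ∈ s, v k) ^ (1 - r) ≤ ∑ k ∈ s, v k ^ (1 - r) * α k ^ r := by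
  set T := ∑ k ∈ s, v k
  have hT : 0 < T := sum_pos hv (nonempty_of_sum_ne_zero (hα1 ▸ one_ne_zero))
  have hmean : ∑ k ∈ s, v k / T * (α k * T / v k) = 1 := by
    rw [← hα1]
    exact sum_congr rfl fun k hk => by field_simp [(hv k hk).ne']
  have hweights : ∑ k ∈ s, v k / T = 1 := by rw [← sum_div, div_self hT.ne']
  have jensen := Real.rpow_arith_mean_le_arith_mean_rpow s (fun k => v k / T)
    (fun k => α k * T / v k) (fun k hk => (div_pos (hv k hk) hT).le) hweights
    (fun k hk => div_nonneg (mul_nonneg (hα k hk) hT.le) (hv k hk).le) hr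
  have hterm : ∀ k ∈ s, v k / T * (α k * T / v k) ^ r = T ^ (r - 1) * (v k ^ (1 - r) * α k ^ r) :=
    fun k hk => by
      have hvk := hv k hk
      rw [Real.div_rpow (mul_nonneg (hα k hk) hT.le) hvk.le, Real.mul_rpow (hα k hk) hT.le,
        Real.rpow_sub_one hT.ne', Real.rpow_sub hvk, Real.rpow_one]
      field_simp
  rw [hmean, Real.one_rpow, sum_congr rfl hterm, ← mul_sum] at jensen
  rw [show T ^ (1 - r) = 1 / T ^ (r - 1) by
    rw [one_div, ← Real.rpow_neg hT.le, neg_sub]]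
  exact (div_le_iff₀' (Real.rpow_pos_of_pos hT _)).mpr jensen

end RpowSums

section Membership

variable {c : ℕ}

/-- The membership update (16) of one row, `h k` being the distance to centroid `k` and `σ` an
ordering of the centroids by increasing distance. -/
noncomputable def closedFormMembership (r : ℝ) (Kt : ℕ) (h : Fin c → ℝ) (σ : Equiv.Perm (Fin c))
    (j : Fin c) : ℝ :=
  if ((σ.symm j : ℕ) < Kt) then
    h j ^ (1 / (1 - r)) / ∑ s ∈ univ.filter (fun s : Fin c => (s : ℕ) < Kt), h (σ s) ^ (1 / (1 - r))
  else 0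

theorem closedFormMembership_nonneg (r : ℝ) (Kt : ℕ) {h : Fin c → ℝ} (hh : ∀ k, 0 ≤ h k)
    (σ : Equiv.Perm (Fin c)) (j : Fin c) : 0 ≤ closedFormMembership r Kt h σ j := by
  unfold closedFormMembership
  split_ifs
  · exact div_nonneg (Real.rpow_nonneg (hh j) _) (sum_nonneg fun s _ => Real.rpow_nonneg (hh _) _)
  · exact le_rfl

theorem sum_mul_rpow_closedFormMembership_le {r : ℝ} (hr : 1 < r) {Kt : ℕ} {h : Fin c → ℝ}
    (hpos : ∀ k, 0 < h k) {σ : Equiv.Perm (Fin c)} (hsort : Monotone (h ∘ σ))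
    {α : Fin c → ℝ} (hα0 : ∀ k, 0 ≤ α k) (hα1 : ∑ k, α k = 1)
    (hαK : #{k | α k ≠ 0} ≤ Kt) :
    ∑ k, h k * closedFormMembership r Kt h σ k ^ r ≤ ∑ k, h k * α k ^ r := by
  set v : Fin c → ℝ := fun k => h k ^ (1 / (1 - r)) with hv_def
  have hv : ∀ k, 0 < v k := fun k => Real.rpow_pos_of_pos (hpos k) _
  have hhv : ∀ k, h k = v k ^ (1 - r) := fun k => by
    rw [hv_def, ← Real.rpow_mul (hpos k).le, one_div_mul_cancel (by linarith), Real.rpow_one]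
  set S := univ.filter fun k => α k ≠ 0
  set B := univ.filter fun s : Fin c => (s : ℕ) < Kt
  have hαS : ∑ k ∈ S, α k = 1 := by rw [sum_filter_ne_zero, hα1]
  have hlower : (∑ k ∈ S, v k) ^ (1 - r) ≤ ∑ k, h k * α k ^ r := by
    have hsupp : ∀ k ∈ univ, h k * α k ^ r ≠ 0 → α k ≠ 0 := fun k _ hk hαk =>
      hk (by rw [hαk, Real.zero_rpow (by linarith), mul_zero])
    rw [← sum_filter_of_ne hsupp]
    simp only [hhv]
    exact Real.rpow_sum_le_sum_rpow_one_sub_mul_rpow S hr.le (fun k _ => hv k) (fun k _ => hα0 k)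
      hαS
  have hTS : 0 < ∑ k ∈ S, v k :=
    sum_pos (fun k _ => hv k) (nonempty_of_sum_ne_zero (hαS ▸ one_ne_zero))
  have hST : ∑ k ∈ S, v k ≤ ∑ s ∈ B, v (σ s) := by
    have hcard : #(S.map σ.symm.toEmbedding) ≤ #B := by
      rw [card_map, Fin.card_filter_val_lt]
      exact le_min (card_le_univ S |>.trans_eq (Fintype.card_fin c)) hαK
    have hdom : ∀ a ∉ B, ∀ b ∈ B, v (σ a) ≤ v (σ b) := fun a ha b hb => by
      simp only [B, mem_filter, mem_univ, true_and, not_lt] at ha hb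
      exact Real.rpow_le_rpow_of_nonpos (hpos _) (hsort (Fin.le_def.mpr (by omega)))
        (one_div_nonpos.mpr (by linarith))
    simpa using sum_le_sum_of_card_le_of_forall_notMem_le hcard hdom fun b _ => (hv (σ b)).le
  have hvalue : ∑ k, h k * closedFormMembership r Kt h σ k ^ r = (∑ s ∈ B, v (σ s)) ^ (1 - r) := by
    have hterm : ∀ s, h (σ s) * closedFormMembership r Kt h σ (σ s) ^ r = if (s : ℕ) < Kt then
        v (σ s) ^ (1 - r) * (v (σ s) / ∑ t ∈ B, v (σ t)) ^ r else 0 := fun s => by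
      simp only [closedFormMembership, Equiv.symm_apply_apply]
      split_ifs
      · rw [← hhv]
      · rw [Real.zero_rpow (by linarith), mul_zero]
    rw [← Equiv.sum_comp σ, sum_congr rfl fun s _ => hterm s, ← sum_filter]
    exact Real.sum_rpow_one_sub_mul_div_sum_rpow B r (fun s _ => hv _) (hTS.trans_le hST)
  calc ∑ k, h k * closedFormMembership r Kt h σ k ^ r = (∑ s ∈ B, v (σ s)) ^ (1 - r) := hvalue
    _ ≤ (∑ k ∈ S, v k) ^ (1 - r) := Real.rpow_le_rpow_of_nonpos hTS hST (by linarith)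
    _ ≤ ∑ k, h k * α k ^ r := hlower

end Membership

section Weiszfeld

variable {ι E : Type*} [NormedAddCommGroup E] [InnerProductSpace ℝ E]

theorem Finset.sum_smul_sub_centerMass (t : Finset ι) (w : ι → ℝ) (x : ι → E)
    (hw : ∑ i ∈ t, w i ≠ 0) : ∑ i ∈ t, w i • (x i - t.centerMass w x) = 0 := by
  simp only [smul_sub, sum_sub_distrib, ← sum_smul, centerMass, smul_inv_smul₀ hw, sub_self]

variable [Fintype ι]

theorem sum_mul_norm_sub_sq_le_of_sum_smul_sub_eq_zero {w : ι → ℝ} (hw : ∀ i, 0 ≤ w i)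
    {x : ι → E} {m : E} (hm : ∑ i, w i • (x i - m) = 0) (y : E) :
    ∑ i, w i * ‖x i - m‖ ^ 2 ≤ ∑ i, w i * ‖x i - y‖ ^ 2 := by
  have hexpand : ∀ i, w i * ‖x i - y‖ ^ 2 = w i * ‖x i - m‖ ^ 2
      + 2 * inner ℝ (w i • (x i - m)) (m - y) + w i * ‖m - y‖ ^ 2 := fun i => by
    rw [show x i - y = (x i - m) + (m - y) by abel, norm_add_sq_real, real_inner_smul_left]
    ring
  simp only [hexpand, sum_add_distrib, ← mul_sum, ← sum_inner, hm, inner_zero_left, mul_zero,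
    add_zero, ← sum_mul]
  have : 0 ≤ (∑ i, w i) * ‖m - y‖ ^ 2 := mul_nonneg (sum_nonneg fun i _ => hw i) (sq_nonneg _)
  linarith

/-- The centroid update (20)–(21), with `u i = α_{ik} ^ r`. -/
noncomputable def reweightedCentroid (x : ι → E) (u : ι → ℝ) (b : E) : E :=
  if 0 < ∑ i, u i / (2 * ‖x i - b‖) then univ.centerMass (fun i => u i / (2 * ‖x i - b‖)) x
  else b

theorem sum_norm_sub_mul_le_of_sum_smul_sub_eq_zero {x : ι → E} {b b' : E} (hne : ∀ i, x i ≠ b)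
    {u : ι → ℝ} (hu : ∀ i, 0 ≤ u i)
    (hb' : ∑ i, (u i / (2 * ‖x i - b‖)) • (x i - b') = 0) :
    ∑ i, ‖x i - b'‖ * u i ≤ ∑ i, ‖x i - b‖ * u i := by
  set w := fun i => u i / (2 * ‖x i - b‖)
  have hpos : ∀ i, 0 < ‖x i - b‖ := fun i => norm_sub_pos_iff.mpr (hne i)
  have hw : ∀ i, 0 ≤ w i := fun i => div_nonneg (hu i) (by linarith [hpos i])
  have hmajorize : ∀ i, ‖x i - b'‖ * u i ≤ w i * ‖x i - b'‖ ^ 2 + ‖x i - b‖ * u i / 2 :=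
    fun i => by
      have key : 0 ≤ u i * (‖x i - b'‖ - ‖x i - b‖) ^ 2 / (2 * ‖x i - b‖) :=
        div_nonneg (mul_nonneg (hu i) (sq_nonneg _)) (by linarith [hpos i])
      have : w i * ‖x i - b'‖ ^ 2 + ‖x i - b‖ * u i / 2 - ‖x i - b'‖ * u i
          = u i * (‖x i - b'‖ - ‖x i - b‖) ^ 2 / (2 * ‖x i - b‖) := by
        simp only [w]; field_simp [(hpos i).ne']; ring
      linarith
  have htight : ∀ i, w i * ‖x i - b‖ ^ 2 = ‖x i - b‖ * u i / 2 := fun i => by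
    simp only [w]; field_simp [(hpos i).ne']
  calc ∑ i, ‖x i - b'‖ * u i ≤ ∑ i, (w i * ‖x i - b'‖ ^ 2 + ‖x i - b‖ * u i / 2) :=
        sum_le_sum fun i _ => hmajorize i
    _ ≤ ∑ i, (w i * ‖x i - b‖ ^ 2 + ‖x i - b‖ * u i / 2) := by
        simp only [sum_add_distrib]
        linarith [sum_mul_norm_sub_sq_le_of_sum_smul_sub_eq_zero hw hb' b]
    _ = ∑ i, ‖x i - b‖ * u i := sum_congr rfl fun i _ => by rw [htight]; ring

theorem sum_norm_sub_reweightedCentroid_mul_le {x : ι → E} {b : E} (hne : ∀ i, x i ≠ b)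
    {u : ι → ℝ} (hu : ∀ i, 0 ≤ u i) :
    ∑ i, ‖x i - reweightedCentroid x u b‖ * u i ≤ ∑ i, ‖x i - b‖ * u i := by
  unfold reweightedCentroid
  split_ifs with hW
  · exact sum_norm_sub_mul_le_of_sum_smul_sub_eq_zero hne hu
      (univ.sum_smul_sub_centerMass _ x hW.ne')
  · exact le_rfl

end Weiszfeld

theorem refcmfs_alternating_iteration_descent_general (d n c : ℕ)
    (x : Fin n → EuclideanSpace ℝ (Fin d)) (b : Fin c → EuclideanSpace ℝ (Fin d))
    (hne : ∀ i k, x i ≠ b k)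
    (r : ℝ) (hr : 1 < r) (Kt : ℕ)
    (α : Fin n → Fin c → ℝ)
    (hα0 : ∀ i k, 0 ≤ α i k) (hα1 : ∀ i, ∑ k, α i k = 1)
    (hαK : ∀ i, (Finset.univ.filter (fun k : Fin c => α i k ≠ 0)).card ≤ Kt)
    (σ : Fin n → Equiv.Perm (Fin c))
    (hsort : ∀ i, ∀ k l : Fin c, k ≤ l → ‖x i - b (σ i k)‖ ≤ ‖x i - b (σ i l)‖)
    (α' : Fin n → Fin c → ℝ)
    (hα' : ∀ i, ∀ j : Fin c, α' i j =
      if (((σ i).symm j : ℕ) < Kt) then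
        ‖x i - b j‖ ^ (1 / (1 - r)) /
          ∑ s ∈ Finset.univ.filter (fun s : Fin c => (s : ℕ) < Kt),
            ‖x i - b (σ i s)‖ ^ (1 / (1 - r))
      else 0)
    (b' : Fin c → EuclideanSpace ℝ (Fin d))
    (hb' : ∀ k, b' k =
      if 0 < ∑ i, (α' i k) ^ r / (2 * ‖x i - b k‖) then
        (∑ i, (α' i k) ^ r / (2 * ‖x i - b k‖))⁻¹ •
          ∑ i, ((α' i k) ^ r / (2 * ‖x i - b k‖)) • x i
      else b k) :
    ∑ i, ∑ k, ‖x i - b' k‖ * (α' i k) ^ r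
      ≤ ∑ i, ∑ k, ‖x i - b k‖ * (α i k) ^ r := by
  have hα'_eq (i : Fin n) : α' i = closedFormMembership r Kt (fun k => ‖x i - b k‖) (σ i) :=
    funext (hα' i)
  have hb'_eq (k : Fin c) : b' k = reweightedCentroid x (fun i => α' i k ^ r) (b k) := hb' k
  have hα'0 (i : Fin n) (k : Fin c) : 0 ≤ α' i k ^ r := by
    rw [hα'_eq]
    exact Real.rpow_nonneg (closedFormMembership_nonneg r Kt (fun _ => norm_nonneg _) _ k) r
  calc ∑ i, ∑ k, ‖x i - b' k‖ * α' i k ^ r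
      = ∑ k, ∑ i, ‖x i - b' k‖ * α' i k ^ r := sum_comm
    _ ≤ ∑ k, ∑ i, ‖x i - b k‖ * α' i k ^ r := sum_le_sum fun k _ => by
        rw [hb'_eq]
        exact sum_norm_sub_reweightedCentroid_mul_le (fun i => hne i k) fun i => hα'0 i k
    _ = ∑ i, ∑ k, ‖x i - b k‖ * α' i k ^ r := sum_comm
    _ ≤ ∑ i, ∑ k, ‖x i - b k‖ * α i k ^ r := sum_le_sum fun i _ => by
        rw [hα'_eq]
        exact sum_mul_rpow_closedFormMembership_le hr (fun k => norm_sub_pos_iff.mpr (hne i k))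
          (hsort i) (hα0 i) (hα1 i) (hαK i)

/-- Theorem 1 of the paper: one full alternating iteration of REFCMFS (membership update via
the closed-form solution (16), followed by the iterative-reweighted centroid update (20)–(21))
monotonically decreases the objective `Σ_{i,k} ‖x_i − b_k‖ α_{ik}^r` over membership matrices
whose rows lie in the probability simplex with at most `K̃` nonzero entries. -/
theorem refcmfs_alternating_iteration_descent (d n c : ℕ) (hc : 1 ≤ c)
    (x : Fin n → EuclideanSpace ℝ (Fin d)) (b : Fin c → EuclideanSpace ℝ (Fin d))
    (hne : ∀ i k, x i ≠ b k)
    (r : ℝ) (hr : 1 < r) (Kt : ℕ) (hK1 : 1 ≤ Kt) (hKc : Kt ≤ c)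
    (α : Fin n → Fin c → ℝ)
    (hα0 : ∀ i k, 0 ≤ α i k) (hα1 : ∀ i, ∑ k, α i k = 1)
    (hαK : ∀ i, (Finset.univ.filter (fun k : Fin c => α i k ≠ 0)).card ≤ Kt)
    (σ : Fin n → Equiv.Perm (Fin c))
    (hsort : ∀ i, ∀ k l : Fin c, k ≤ l → ‖x i - b (σ i k)‖ ≤ ‖x i - b (σ i l)‖)
    (α' : Fin n → Fin c → ℝ)
    (hα' : ∀ i, ∀ j : Fin c, α' i j =
      if (((σ i).symm j : ℕ) < Kt) then
        ‖x i - b j‖ ^ (1 / (1 - r)) /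
          ∑ s ∈ Finset.univ.filter (fun s : Fin c => (s : ℕ) < Kt),
            ‖x i - b (σ i s)‖ ^ (1 / (1 - r))
      else 0)
    (b' : Fin c → EuclideanSpace ℝ (Fin d))
    (hb' : ∀ k, b' k =
      if 0 < ∑ i, (α' i k) ^ r / (2 * ‖x i - b k‖) then
        (∑ i, (α' i k) ^ r / (2 * ‖x i - b k‖))⁻¹ •
          ∑ i, ((α' i k) ^ r / (2 * ‖x i - b k‖)) • x i
      else b k) :
    ∑ i, ∑ k, ‖x i - b' k‖ * (α' i k) ^ r
      ≤ ∑ i, ∑ k, ‖x i - b k‖ * (α i k) ^ r :=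
  refcmfs_alternating_iteration_descent_general d n c x b hne r hr Kt α hα0 hα1 hαK σ hsort α' hα'
    b' hb'
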